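/- arXiv:1306.0409 — 3 statements merged into one kernel-verified Lean document; each statement's English description precedes it below -/
import Mathlib

section
/- Let T be a 2×2 unitary matrix with overlap c = max_{k,l=1,2} |T_{lk}| and γ = arccos c. Then for every unit vector ψ ∈ ℂ² and all Rényi indices α, β ≥ 0, the sum H_α(|ψ|²) + H_β(|Tψ|²) is bounded below by min_{θ ∈ [0,γ]} [ H_α((cos²θ, sin²θ)) + H_β((cos²(γ−θ), sin²(γ−θ))) ]. -/
/-! Let `θ(φ) = arccos (max |φ₀| |φ₁|)` be the angle between a unit vector `φ ∈ ℂ²` and the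
nearest coordinate axis. The Rényi entropy `H_λ(p, 1 - p)` only decreases as `max p (1 - p)`
grows (for `λ ≠ 1` it is a monotone function of `pw p λ + pw (1 - p) λ`, and `pw · λ` is concave
for `λ ≤ 1`, convex for `λ ≥ 1`), so `H_α(cos² θ, sin² θ) ≤ H_α(|ψ|²)` whenever
`0 ≤ θ ≤ θ(ψ)`, and likewise for `Tψ`. It therefore suffices to find `θ ∈ [0, γ]` with
`θ ≤ θ(ψ)` and `γ - θ ≤ θ(Tψ)`, i.e. to prove the angle inequality `γ ≤ θ(ψ) + θ(Tψ)`. When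
`θ(ψ) < γ`, each row of `T` is a unit vector with entries at most `c = cos γ`, and this bounds
every component of `Tψ` by `cos γ · cos θ(ψ) + sin γ · sin θ(ψ) = cos (γ - θ(ψ))`. -/

open Real

/-- Power with the convention `0 ^ λ = 0` for all `λ ≥ 0`. -/
noncomputable def pw (p lam : ℝ) : ℝ := if p = 0 then 0 else p ^ lam

/-- Rényi entropy of the two-point probability vector `(p₁, p₂)`:
`H_λ(p) = (1/(1-λ)) log (p₁^λ + p₂^λ)` for `λ ≠ 1`, Shannon entropy for `λ = 1`. -/
noncomputable def Hren (lam p1 p2 : ℝ) : ℝ :=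
  if lam = 1 then -(p1 * Real.log p1 + p2 * Real.log p2)
  else (1 - lam)⁻¹ * Real.log (pw p1 lam + pw p2 lam)

/-- `g(θ) = H_α((cos²θ, sin²θ)) + H_β((cos²(γ−θ), sin²(γ−θ)))`. -/
noncomputable def gfun (α β γ θ : ℝ) : ℝ :=
  Hren α (Real.cos θ ^ 2) (Real.sin θ ^ 2) +
    Hren β (Real.cos (γ - θ) ^ 2) (Real.sin (γ - θ) ^ 2)

open Set
open scoped Matrix

lemma pw_eq_rpow (p : ℝ) {lam : ℝ} (hlam : lam ≠ 0) : pw p lam = p ^ lam := by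
  unfold pw
  split_ifs with hp
  · rw [hp, zero_rpow hlam]
  · rfl

lemma pw_nonneg {p : ℝ} (hp : 0 ≤ p) (lam : ℝ) : 0 ≤ pw p lam := by
  unfold pw
  split_ifs
  exacts [le_rfl, rpow_nonneg hp lam]

lemma pw_pos {p : ℝ} (hp : 0 < p) (lam : ℝ) : 0 < pw p lam := by
  rw [pw, if_neg hp.ne']
  exact rpow_pos_of_pos hp lam

lemma pw_add_pw_one_sub_pos {p : ℝ} (h₀ : 0 ≤ p) (h₁ : p ≤ 1) (lam : ℝ) :
    0 < pw p lam + pw (1 - p) lam := by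
  rcases h₀.eq_or_lt with rfl | hp
  · simp [pw]
  · exact add_pos_of_pos_of_nonneg (pw_pos hp lam) (pw_nonneg (by linarith) lam)

lemma concaveOn_pw_zero : ConcaveOn ℝ (Ici 0) (pw · 0) := by
  refine ⟨convex_Ici 0, fun x hx y hy a b ha hb hab => ?_⟩
  simp only [mem_Ici, smul_eq_mul] at hx hy ⊢
  rcases eq_or_ne (a * x + b * y) 0 with h | h
  · have hvanish : ∀ c z, c * z = 0 → c * pw z 0 = 0 := by
      intro c z hcz
      rcases mul_eq_zero.1 hcz with rfl | rfl <;> simp [pw]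
    rw [hvanish a x (by linarith [mul_nonneg ha hx, mul_nonneg hb hy]),
      hvanish b y (by linarith [mul_nonneg ha hx, mul_nonneg hb hy]), h]
    simp [pw]
  · have hle : ∀ z, pw z 0 ≤ 1 := fun z => by unfold pw; split_ifs <;> norm_num
    rw [show pw (a * x + b * y) 0 = 1 by rw [pw, if_neg h, rpow_zero]]
    nlinarith [hle x, hle y]

lemma concaveOn_pw {lam : ℝ} (h₀ : 0 ≤ lam) (h₁ : lam ≤ 1) : ConcaveOn ℝ (Ici 0) (pw · lam) := by
  rcases h₀.eq_or_lt with rfl | hpos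
  · exact concaveOn_pw_zero
  · exact (concaveOn_rpow h₀ h₁).congr fun p _ => (pw_eq_rpow p hpos.ne').symm

lemma convexOn_pw {lam : ℝ} (h : 1 ≤ lam) : ConvexOn ℝ (Ici 0) (pw · lam) :=
  (convexOn_rpow h).congr fun p _ => (pw_eq_rpow p (by positivity)).symm

lemma ConcaveOn.add_comp_one_sub_le {f : ℝ → ℝ} (hf : ConcaveOn ℝ (Ici 0) f) {p q : ℝ}
    (hp : p ∈ Icc (1 - q) q) (hq : q ≤ 1) : f q + f (1 - q) ≤ f p + f (1 - p) := by
  have hreflect : ConcaveOn ℝ (Icc 0 1) fun t => f (1 - t) := by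
    refine (hf.comp_affineMap (AffineMap.lineMap 1 0)).subset ?_ (convex_Icc 0 1) |>.congr ?_
    · intro t ht
      simpa [AffineMap.lineMap_apply] using ht.2
    · intro t _
      simp [AffineMap.lineMap_apply, neg_add_eq_sub]
  have hq' : 1 - q ≤ q := hp.1.trans hp.2
  have hsum := (hf.subset Icc_subset_Ici_self (convex_Icc 0 1)).add hreflect
  have := hsum.ge_on_segment (x := 1 - q) (y := q) ⟨by linarith, by linarith⟩
    ⟨by linarith, hq⟩ (by rwa [segment_eq_Icc hq'])
  simpa [add_comm] using this

lemma ConvexOn.add_comp_one_sub_le {f : ℝ → ℝ} (hf : ConvexOn ℝ (Ici 0) f) {p q : ℝ}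
    (hp : p ∈ Icc (1 - q) q) (hq : q ≤ 1) : f p + f (1 - p) ≤ f q + f (1 - q) := by
  have := hf.neg.add_comp_one_sub_le hp hq
  simp only [Pi.neg_apply] at this
  linarith

lemma Hren_le_of_le {lam p₁ p₂ q : ℝ} (hlam : 0 ≤ lam) (hp : p₁ + p₂ = 1)
    (h₁ : p₁ ≤ q) (h₂ : p₂ ≤ q) (hq : q ≤ 1) : Hren lam q (1 - q) ≤ Hren lam p₁ p₂ := by
  obtain rfl : p₂ = 1 - p₁ := by linarith
  have hp₁ : p₁ ∈ Icc (1 - q) q := ⟨by linarith, h₁⟩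
  rcases lt_trichotomy lam 1 with hlt | rfl | hgt
  · have hF := (concaveOn_pw hlam hlt.le).add_comp_one_sub_le hp₁ hq
    simp only [Hren, if_neg hlt.ne]
    exact mul_le_mul_of_nonneg_left
      (log_le_log (pw_add_pw_one_sub_pos (by linarith) hq lam) hF) (inv_nonneg.2 (by linarith))
  · have := concaveOn_negMulLog.add_comp_one_sub_le hp₁ hq
    simp only [Hren, if_true, negMulLog] at this ⊢
    linarith
  · have hF := (convexOn_pw hgt.le).add_comp_one_sub_le hp₁ hq
    simp only [Hren, if_neg hgt.ne']
    exact mul_le_mul_of_nonpos_left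
      (log_le_log (pw_add_pw_one_sub_pos (by linarith) (by linarith) lam) hF)
      (inv_nonpos.2 (by linarith))

lemma Hren_nonneg {lam p₁ p₂ : ℝ} (hlam : 0 ≤ lam) (h₁ : 0 ≤ p₁) (h₂ : 0 ≤ p₂)
    (hp : p₁ + p₂ = 1) : 0 ≤ Hren lam p₁ p₂ := by
  simpa [Hren, pw] using Hren_le_of_le hlam hp (by linarith) (by linarith) le_rfl

lemma Hren_cos_sq_le {lam a b θ : ℝ} (hlam : 0 ≤ lam) (ha : 0 ≤ a) (hb : 0 ≤ b)
    (hab : a ^ 2 + b ^ 2 = 1) (hθ₀ : 0 ≤ θ) (hθ : θ ≤ arccos (max a b)) :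
    Hren lam (cos θ ^ 2) (sin θ ^ 2) ≤ Hren lam (a ^ 2) (b ^ 2) := by
  have hmax : max a b ≤ cos θ := by
    have hmax₁ : max a b ≤ 1 := max_le (by nlinarith) (by nlinarith)
    simpa [cos_arccos (by linarith [le_max_left a b]) hmax₁] using
      cos_le_cos_of_nonneg_of_le_pi hθ₀ (arccos_le_pi _) hθ
  rw [sin_sq]
  exact Hren_le_of_le hlam hab (pow_le_pow_left₀ ha (le_of_max_le_left hmax) 2)
    (pow_le_pow_left₀ hb (le_of_max_le_right hmax) 2) (cos_sq_le_one θ)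

lemma gfun_nonneg {α β : ℝ} (hα : 0 ≤ α) (hβ : 0 ≤ β) (γ θ : ℝ) : 0 ≤ gfun α β γ θ :=
  add_nonneg (Hren_nonneg hα (sq_nonneg _) (sq_nonneg _) (cos_sq_add_sin_sq θ))
    (Hren_nonneg hβ (sq_nonneg _) (sq_nonneg _) (cos_sq_add_sin_sq (γ - θ)))

lemma mul_add_mul_le_of_sq_add_sq_eq_one {x y a b c s : ℝ} (hx : 0 ≤ x) (hy : 0 ≤ y)
    (hb : 0 ≤ b) (hs : 0 ≤ s) (hxy : x ^ 2 + y ^ 2 = 1) (hab : a ^ 2 + b ^ 2 = 1)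
    (hcs : c ^ 2 + s ^ 2 = 1) (hxc : x ≤ c) (hca : c ≤ a) :
    x * a + y * b ≤ c * a + s * b := by
  have hc : 0 ≤ c := hx.trans hxc
  have ha : 0 ≤ a := hc.trans hca
  have hsy : s ≤ y := by
    rw [← pow_le_pow_iff_left₀ hs hy two_ne_zero]
    nlinarith [pow_le_pow_left₀ hx hxc 2]
  have hbs : b ≤ s := by
    rw [← pow_le_pow_iff_left₀ hb hs two_ne_zero]
    nlinarith [pow_le_pow_left₀ hc hca 2]
  have hcross₀ : 0 ≤ s * a - c * b := by nlinarith [mul_le_mul hca hbs hb ha]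
  have hcross : s * a - c * b ≤ y * a - x * b := by
    nlinarith [mul_nonneg (sub_nonneg.2 hsy) ha, mul_nonneg (sub_nonneg.2 hxc) hb]
  -- Lagrange's identity turns the comparison of inner products into one of cross products.
  have hlagrange₁ : (x * a + y * b) ^ 2 + (y * a - x * b) ^ 2 = 1 := by
    linear_combination (a ^ 2 + b ^ 2) * hxy + hab
  have hlagrange₂ : (c * a + s * b) ^ 2 + (s * a - c * b) ^ 2 = 1 := by
    linear_combination (a ^ 2 + b ^ 2) * hcs + hab
  have hsq : (x * a + y * b) ^ 2 ≤ (c * a + s * b) ^ 2 := by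
    nlinarith [pow_le_pow_left₀ hcross₀ hcross 2]
  exact (le_abs_self _).trans (abs_le_of_sq_le_sq hsq (by positivity))

lemma mul_add_mul_le_cos_arccos_sub_arccos {x y a b c : ℝ} (hx : 0 ≤ x) (hy : 0 ≤ y)
    (ha : 0 ≤ a) (hb : 0 ≤ b) (hxy : x ^ 2 + y ^ 2 = 1) (hab : a ^ 2 + b ^ 2 = 1)
    (hxc : x ≤ c) (hyc : y ≤ c) (hcM : c ≤ max a b) :
    x * a + y * b ≤ cos (arccos c - arccos (max a b)) := by
  wlog hba : b ≤ a generalizing x y a b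
  · have := this hy hx hb ha (by linarith) (by linarith) hyc hxc (by rwa [max_comm])
      (le_of_not_ge hba)
    rwa [max_comm, add_comm] at this
  rw [max_eq_left hba] at hcM ⊢
  have hc : 0 ≤ c := hx.trans hxc
  have ha₁ : a ≤ 1 := by nlinarith
  have hsqrt : √(1 - a ^ 2) = b := by
    rw [show 1 - a ^ 2 = b ^ 2 by linarith, sqrt_sq hb]
  rw [cos_sub, cos_arccos (by linarith) (hcM.trans ha₁), cos_arccos (by linarith) ha₁,
    sin_arccos, sin_arccos, hsqrt]
  exact mul_add_mul_le_of_sq_add_sq_eq_one hx hy hb (sqrt_nonneg _) hxy hab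
    (by rw [sq_sqrt (by nlinarith)]; ring) hxc hcM

lemma Matrix.sum_norm_sq_row_eq_one {n : Type*} [Fintype n] [DecidableEq n]
    {U : Matrix n n ℂ} (hU : U ∈ Matrix.unitaryGroup n ℂ) (i : n) :
    ∑ j, ‖U i j‖ ^ 2 = 1 := by
  have h := congr_fun₂ (Matrix.mem_unitaryGroup_iff.mp hU) i i
  simp only [Matrix.mul_apply, Matrix.star_apply, Matrix.one_apply_eq, Complex.star_def,
    Complex.mul_conj'] at h
  exact_mod_cast h

lemma Matrix.sum_norm_sq_mulVec {n : Type*} [Fintype n] [DecidableEq n]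
    {U : Matrix n n ℂ} (hU : U ∈ Matrix.unitaryGroup n ℂ) (v : n → ℂ) :
    ∑ i, ‖(U *ᵥ v) i‖ ^ 2 = ∑ i, ‖v i‖ ^ 2 := by
  have hsum : ∀ w : n → ℂ, star w ⬝ᵥ w = ((∑ i, ‖w i‖ ^ 2 : ℝ) : ℂ) := by
    intro w
    simp [dotProduct, Complex.conj_mul']
  have h : star (U *ᵥ v) ⬝ᵥ (U *ᵥ v) = star v ⬝ᵥ v := by
    rw [Matrix.star_mulVec, ← Matrix.dotProduct_mulVec, Matrix.mulVec_mulVec,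
      ← Matrix.star_eq_conjTranspose, Matrix.mem_unitaryGroup_iff'.mp hU, Matrix.one_mulVec]
  exact_mod_cast (hsum _).symm.trans (h.trans (hsum v))

lemma norm_mulVec_apply_le (T : Matrix (Fin 2) (Fin 2) ℂ) (ψ : Fin 2 → ℂ) (l : Fin 2) :
    ‖(T *ᵥ ψ) l‖ ≤ ‖T l 0‖ * ‖ψ 0‖ + ‖T l 1‖ * ‖ψ 1‖ := by
  simp only [Matrix.mulVec, dotProduct, Fin.sum_univ_two, ← norm_mul]
  exact norm_add_le _ _

lemma arccos_le_arccos_max_add_arccos_max_mulVec {T : Matrix (Fin 2) (Fin 2) ℂ}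
    (hT : T ∈ Matrix.unitaryGroup (Fin 2) ℂ) {c : ℝ} (hc : ∀ k l, ‖T l k‖ ≤ c)
    {ψ : Fin 2 → ℂ} (hψ : ‖ψ 0‖ ^ 2 + ‖ψ 1‖ ^ 2 = 1) :
    arccos c ≤ arccos (max ‖ψ 0‖ ‖ψ 1‖) + arccos (max ‖(T *ᵥ ψ) 0‖ ‖(T *ᵥ ψ) 1‖) := by
  set θ := arccos (max ‖ψ 0‖ ‖ψ 1‖)
  have hθ₀ : 0 ≤ θ := arccos_nonneg _
  rcases le_or_gt (arccos c) θ with h | h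
  · linarith [arccos_nonneg (max ‖(T *ᵥ ψ) 0‖ ‖(T *ᵥ ψ) 1‖)]
  have hcM : c ≤ max ‖ψ 0‖ ‖ψ 1‖ := le_of_not_ge fun hMc => h.not_ge (arccos_le_arccos hMc)
  have hrow : ∀ l, ‖(T *ᵥ ψ) l‖ ≤ cos (arccos c - θ) := fun l =>
    (norm_mulVec_apply_le T ψ l).trans <| mul_add_mul_le_cos_arccos_sub_arccos
      (norm_nonneg _) (norm_nonneg _) (norm_nonneg _) (norm_nonneg _)
      (by simpa [Fin.sum_univ_two] using Matrix.sum_norm_sq_row_eq_one hT l) hψ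
      (hc 0 l) (hc 1 l) hcM
  rw [← sub_le_iff_le_add']
  calc arccos c - θ = arccos (cos (arccos c - θ)) :=
        (arccos_cos (by linarith) (by linarith [arccos_le_pi c])).symm
    _ ≤ _ := arccos_le_arccos (max_le (hrow 0) (hrow 1))

/-- tight lower bound (Proposition 1, inequality part) for the sum of
Rényi entropies of a qubit state in two bases related by a unitary `T`. -/
theorem stmt_0 (T : Matrix (Fin 2) (Fin 2) ℂ)
    (hT : T ∈ Matrix.unitaryGroup (Fin 2) ℂ)
    (c γ : ℝ)
    (hc : IsGreatest {x : ℝ | ∃ k l : Fin 2, x = ‖T l k‖} c)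
    (hγ : γ = Real.arccos c)
    (α β : ℝ) (hα : 0 ≤ α) (hβ : 0 ≤ β)
    (ψ : Fin 2 → ℂ)
    (hψ : ‖ψ 0‖ ^ 2 + ‖ψ 1‖ ^ 2 = 1) :
    sInf ((fun θ : ℝ => gfun α β γ θ) '' Set.Icc 0 γ) ≤
      Hren α (‖ψ 0‖ ^ 2) (‖ψ 1‖ ^ 2) +
        Hren β (‖T.mulVec ψ 0‖ ^ 2) (‖T.mulVec ψ 1‖ ^ 2) := by
  have hTψ : ‖(T *ᵥ ψ) 0‖ ^ 2 + ‖(T *ᵥ ψ) 1‖ ^ 2 = 1 := by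
    simpa [Fin.sum_univ_two, hψ] using Matrix.sum_norm_sq_mulVec hT ψ
  set θ₁ := arccos (max ‖ψ 0‖ ‖ψ 1‖)
  set θ₂ := arccos (max ‖(T *ᵥ ψ) 0‖ ‖(T *ᵥ ψ) 1‖)
  have hangle : γ ≤ θ₁ + θ₂ :=
    hγ ▸ arccos_le_arccos_max_add_arccos_max_mulVec hT (fun k l => hc.2 ⟨k, l, rfl⟩) hψ
  obtain ⟨θ, hθ, hθ₁, hθ₂⟩ : ∃ θ ∈ Icc 0 γ, θ ≤ θ₁ ∧ γ - θ ≤ θ₂ := by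
    refine ⟨min θ₁ γ, ⟨le_min (arccos_nonneg _) (hγ ▸ arccos_nonneg c), min_le_right _ _⟩,
      min_le_left _ _, ?_⟩
    have hθ₂₀ : 0 ≤ θ₂ := arccos_nonneg _
    rcases min_cases θ₁ γ with ⟨h, -⟩ | ⟨h, -⟩ <;> linarith
  have hbdd : BddBelow ((fun θ : ℝ => gfun α β γ θ) '' Icc 0 γ) :=
    ⟨0, by rintro _ ⟨t, -, rfl⟩; exact gfun_nonneg hα hβ γ t⟩
  refine (csInf_le hbdd ⟨θ, hθ, rfl⟩).trans (add_le_add ?_ ?_)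
  · exact Hren_cos_sq_le hα (norm_nonneg _) (norm_nonneg _) hψ hθ.1 hθ₁
  · exact Hren_cos_sq_le hβ (norm_nonneg _) (norm_nonneg _) hTψ (sub_nonneg.2 hθ.2) hθ₂
end

section
/- Let T = Φ(u) V(γ_T) Φ(v) be a 2×2 unitary matrix, where Φ(x) = diag(e^{ix₁}, e^{ix₂}) for x ∈ ℝ², V(γ_T) = [[cos γ_T, sin γ_T], [−sin γ_T, cos γ_T]], γ_T ∈ [0, π/2], and u, v ∈ ℝ². Set γ = min(γ_T, π/2 − γ_T) (so that cos γ = c, the overlap of T). Let α, β ≥ 0 and let θ₀ ∈ [0, γ] be any point attaining the minimum of θ ↦ H_α((cos²θ, sin²θ)) + H_β((cos²(γ−θ), sin²(γ−θ))) over [0, γ]. Put ε = 1 if γ_T ≤ π/4 and ε = −1 if γ_T > π/4. Then for every φ ∈ [0, 2π) and every n ∈ {0, 1}, the unit vector ψ = e^{iφ} Φ(−v) · (cos(ε θ₀ + nπ/2), sin(ε θ₀ + nπ/2))ᵗ satisfies H_α(|ψ|²) + H_β(|Tψ|²) = min_{θ ∈ [0,γ]} [ H_α((cos²θ, sin²θ))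 + H_β((cos²(γ−θ), sin²(γ−θ))) ]. -/
open Real

/-- `Φ(x) = diag(e^{i x₁}, e^{i x₂})`. -/
noncomputable def PhiM (x : Fin 2 → ℝ) : Matrix (Fin 2) (Fin 2) ℂ :=
  Matrix.diagonal fun k => Complex.exp (Complex.I * (x k : ℂ))

/-- `V(γ) = [[cos γ, sin γ], [−sin γ, cos γ]]`. -/
noncomputable def Vrot (g : ℝ) : Matrix (Fin 2) (Fin 2) ℂ :=
  !![(Real.cos g : ℂ), (Real.sin g : ℂ); (-Real.sin g : ℂ), (Real.cos g : ℂ)]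

/-!
Every state of the given form has probability vectors `(cos² x, sin² x)` and
`(cos² (γ_T - x), sin² (γ_T - x))`, with `x = εθ₀ + nπ/2`: the phases `e^{iφ}` and
`Φ(±v)`, `Φ(u)` do not change moduli, and `V(γ_T)` rotates `(cos x, sin x)` by `γ_T`.
The entropy `H_λ(cos² x, sin² x)` is even and `π/2`-periodic in `x`, because its two
arguments are swapped by `x ↦ x + π/2`; and `γ_T ≡ εγ (mod π/2)`. So the entropy sum of
the state is `g(θ₀)`, which is the minimum of `g` on `[0, γ]`.
-/

open Complex Matrix

/-- `gfun α β γ θ` is definitionally `angleEntropy α θ + angleEntropy β (γ - θ)`. -/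
noncomputable def angleEntropy (lam x : ℝ) : ℝ :=
  Hren lam (Real.cos x ^ 2) (Real.sin x ^ 2)

lemma Hren_comm (lam p q : ℝ) : Hren lam p q = Hren lam q p := by
  unfold Hren
  rw [add_comm (pw p lam), add_comm (p * Real.log p)]

lemma angleEntropy_neg (lam x : ℝ) : angleEntropy lam (-x) = angleEntropy lam x := by
  simp only [angleEntropy, Real.cos_neg, Real.sin_neg, neg_sq]

lemma angleEntropy_periodic (lam : ℝ) : Function.Periodic (angleEntropy lam) (π / 2) := by
  intro x
  simp only [angleEntropy, Real.cos_add_pi_div_two, Real.sin_add_pi_div_two, neg_sq]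
  exact Hren_comm lam _ _

lemma angleEntropy_add_int_mul (lam x : ℝ) (k : ℤ) :
    angleEntropy lam (x + k * (π / 2)) = angleEntropy lam x :=
  (angleEntropy_periodic lam).int_mul k x

lemma angleEntropy_add_angleEntropy_eq_gfun (α β γT γ θ₀ ε : ℝ) (n : ℕ)
    (hγ : γ = min γT (π / 2 - γT)) (hε : ε = if γT ≤ π / 4 then (1 : ℝ) else -1) :
    angleEntropy α (ε * θ₀ + n * (π / 2)) + angleEntropy β (γT - (ε * θ₀ + n * (π / 2))) =
      gfun α β γ θ₀ := by
  rcases le_or_gt γT (π / 4) with hle | hlt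
  · obtain rfl : ε = 1 := by rw [hε, if_pos hle]
    obtain rfl : γ = γT := by rw [hγ, min_eq_left (by linarith)]
    have hx : 1 * θ₀ + n * (π / 2) = θ₀ + ((n : ℤ) : ℝ) * (π / 2) := by push_cast; ring
    have hy : γ - (θ₀ + ((n : ℤ) : ℝ) * (π / 2)) = (γ - θ₀) + ((-n : ℤ) : ℝ) * (π / 2) := by
      push_cast; ring
    rw [hx, hy, angleEntropy_add_int_mul, angleEntropy_add_int_mul]
    rfl
  · obtain rfl : ε = -1 := by rw [hε, if_neg (not_le.mpr hlt)]
    obtain rfl : γ = π / 2 - γT := by rw [hγ, min_eq_right (by linarith)]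
    have hx : -1 * θ₀ + n * (π / 2) = -θ₀ + ((n : ℤ) : ℝ) * (π / 2) := by push_cast; ring
    have hy : γT - (-θ₀ + ((n : ℤ) : ℝ) * (π / 2)) =
        -(π / 2 - γT - θ₀) + ((1 - n : ℤ) : ℝ) * (π / 2) := by
      push_cast; ring
    rw [hx, hy, angleEntropy_add_int_mul, angleEntropy_add_int_mul, angleEntropy_neg,
      angleEntropy_neg]
    rfl

lemma PhiM_mul_PhiM_neg (v : Fin 2 → ℝ) : PhiM v * PhiM (-v) = 1 := by
  rw [PhiM, PhiM, diagonal_mul_diagonal, ← diagonal_one]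
  congr 1
  funext k
  rw [← Complex.exp_add]
  simp

lemma norm_PhiM_mulVec (x : Fin 2 → ℝ) (w : Fin 2 → ℂ) (k : Fin 2) :
    ‖(PhiM x *ᵥ w) k‖ = ‖w k‖ := by
  simp [PhiM, mulVec_diagonal, norm_exp_I_mul_ofReal]

lemma Vrot_mulVec_cos_sin (g x : ℝ) :
    Vrot g *ᵥ ![(Real.cos x : ℂ), (Real.sin x : ℂ)] =
      ![(Real.cos (g - x) : ℂ), -(Real.sin (g - x) : ℂ)] := by
  ext k
  fin_cases k
  · simp [Vrot, mulVec, dotProduct, Real.cos_sub]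
  · simp [Vrot, mulVec, dotProduct, Real.sin_sub]
    ring

theorem stmt_2_general (u v : Fin 2 → ℝ) (γT : ℝ)
    (T : Matrix (Fin 2) (Fin 2) ℂ)
    (hTdec : T = PhiM u * Vrot γT * PhiM v)
    (γ : ℝ) (hγ : γ = min γT (Real.pi / 2 - γT))
    (α β : ℝ)
    (θ₀ : ℝ) (hθ₀ : θ₀ ∈ Set.Icc 0 γ)
    (hmin : ∀ θ ∈ Set.Icc 0 γ, gfun α β γ θ₀ ≤ gfun α β γ θ)
    (ε : ℝ) (hε : ε = if γT ≤ Real.pi / 4 then (1 : ℝ) else -1)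
    (φ : ℝ)
    (n : ℕ)
    (ψ : Fin 2 → ℂ)
    (hψ : ψ = fun k =>
      Complex.exp (Complex.I * (φ : ℂ)) *
        (PhiM (-v)).mulVec
          ![(Real.cos (ε * θ₀ + n * (Real.pi / 2)) : ℂ),
            (Real.sin (ε * θ₀ + n * (Real.pi / 2)) : ℂ)] k) :
    Hren α (‖ψ 0‖ ^ 2) (‖ψ 1‖ ^ 2) +
      Hren β (‖T.mulVec ψ 0‖ ^ 2) (‖T.mulVec ψ 1‖ ^ 2) =
      sInf ((fun θ : ℝ => gfun α β γ θ) '' Set.Icc 0 γ) := by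
  set x := ε * θ₀ + n * (π / 2)
  have hψ' : ψ = cexp (I * φ) • (PhiM (-v) *ᵥ ![(Real.cos x : ℂ), (Real.sin x : ℂ)]) := hψ
  have hTψ : T *ᵥ ψ =
      cexp (I * φ) • (PhiM u *ᵥ ![(Real.cos (γT - x) : ℂ), -(Real.sin (γT - x) : ℂ)]) := by
    rw [hψ', hTdec, mulVec_smul, mulVec_mulVec, mul_assoc, PhiM_mul_PhiM_neg, mul_one,
      ← mulVec_mulVec, Vrot_mulVec_cos_sin]
  have hsInf : sInf ((fun θ : ℝ => gfun α β γ θ) '' Set.Icc 0 γ) = gfun α β γ θ₀ :=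
    IsLeast.csInf_eq ⟨⟨θ₀, hθ₀, rfl⟩, by rintro y ⟨θ, hθ, rfl⟩; exact hmin θ hθ⟩
  rw [hsInf, ← angleEntropy_add_angleEntropy_eq_gfun α β γT γ θ₀ ε n hγ hε, hTψ, hψ']
  simp only [Pi.smul_apply, smul_eq_mul, norm_mul, norm_exp_I_mul_ofReal, one_mul,
    norm_PhiM_mulVec, cons_val_zero, cons_val_one, norm_neg, Complex.norm_real,
    Real.norm_eq_abs, sq_abs]
  rfl

/-- explicit minimizing states (Proposition 2). -/
theorem stmt_2 (u v : Fin 2 → ℝ) (γT : ℝ)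
    (hγT : γT ∈ Set.Icc 0 (Real.pi / 2))
    (T : Matrix (Fin 2) (Fin 2) ℂ)
    (hTdec : T = PhiM u * Vrot γT * PhiM v)
    (γ : ℝ) (hγ : γ = min γT (Real.pi / 2 - γT))
    (α β : ℝ) (hα : 0 ≤ α) (hβ : 0 ≤ β)
    (θ₀ : ℝ) (hθ₀ : θ₀ ∈ Set.Icc 0 γ)
    (hmin : ∀ θ ∈ Set.Icc 0 γ, gfun α β γ θ₀ ≤ gfun α β γ θ)
    (ε : ℝ) (hε : ε = if γT ≤ Real.pi / 4 then (1 : ℝ) else -1)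
    (φ : ℝ) (hφ : φ ∈ Set.Ico 0 (2 * Real.pi))
    (n : ℕ) (hn : n = 0 ∨ n = 1)
    (ψ : Fin 2 → ℂ)
    (hψ : ψ = fun k =>
      Complex.exp (Complex.I * (φ : ℂ)) *
        (PhiM (-v)).mulVec
          ![(Real.cos (ε * θ₀ + n * (Real.pi / 2)) : ℂ),
            (Real.sin (ε * θ₀ + n * (Real.pi / 2)) : ℂ)] k) :
    Hren α (‖ψ 0‖ ^ 2) (‖ψ 1‖ ^ 2) +
      Hren β (‖T.mulVec ψ 0‖ ^ 2) (‖T.mulVec ψ 1‖ ^ 2) =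
      sInf ((fun θ : ℝ => gfun α β γ θ) '' Set.Icc 0 γ) :=
  stmt_2_general u v γT T hTdec γ hγ α β θ₀ hθ₀ hmin ε hε φ n ψ hψ
end

section
/- For every λ ∈ (0, 1/2], the function θ ↦ H_λ((cos²θ, sin²θ)) = (1/(1−λ))·log( (cos²θ)^λ + (sin²θ)^λ ) is concave on [0, π/4], and its second derivative is strictly negative on (0, π/4). Consequently, for α, β ∈ (0, 1/2] and γ ∈ [0, π/4], the function θ ↦ H_α((cos²θ, sin²θ)) + H_β((cos²(γ−θ), sin²(γ−θ))) is concave on [0, γ] and attains its minimum over [0, γ] at an endpoint. -/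
open Real

/-
For `0 < λ < 1` write `H_λ(cos² θ, sin² θ) = (1 - λ)⁻¹ log A(θ)` with
`A(θ) = (cos² θ)^λ + (sin² θ)^λ`. With `p = sin² θ`, `q = cos² θ`, `a = p^λ`, `b = q^λ`, the
numerator `A'' A - A'²` of `(log A)''` equals
`-λ (4λ (a q - b p)² + (2 - 4λ)(a q² + b p²)(a + b) + 2 p q (a + b)²) / (p q)`,
which is negative as soon as `λ ≤ 1/2`. Hence the entropy is strictly concave in `θ` on the whole
of `[0, π/2]`; reflecting `θ ↦ γ - θ` preserves concavity, and a concave function on an interval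
attains its minimum at an endpoint.
-/

open Set

lemma ConcaveOn.isMinOn_left_or_right {𝕜 β : Type*} [Field 𝕜] [LinearOrder 𝕜]
    [IsStrictOrderedRing 𝕜] [AddCommGroup β] [LinearOrder β] [IsOrderedAddMonoid β]
    [Module 𝕜 β] [IsStrictOrderedModule 𝕜 β] {f : 𝕜 → β} {a b : 𝕜}
    (hf : ConcaveOn 𝕜 (Icc a b) f) (hab : a ≤ b) :
    IsMinOn f (Icc a b) a ∨ IsMinOn f (Icc a b) b := by
  have hmin := fun z (hz : z ∈ Icc a b) =>
    hf.min_le_of_mem_Icc (left_mem_Icc.2 hab) (right_mem_Icc.2 hab) hz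
  rcases le_total (f a) (f b) with h | h
  · exact Or.inl fun z hz => by simpa [min_eq_left h] using hmin z hz
  · exact Or.inr fun z hz => by simpa [min_eq_right h] using hmin z hz

lemma ConcaveOn.comp_const_sub {s : Set ℝ} {f : ℝ → ℝ} (hf : ConcaveOn ℝ s f) (c : ℝ) :
    ConcaveOn ℝ ((c - ·) ⁻¹' s) (fun x => f (c - x)) :=
  hf.comp_affineMap (AffineMap.const ℝ ℝ c - AffineMap.id ℝ ℝ)

lemma Hren_eq_log (p q : ℝ) {lam : ℝ} (hl0 : lam ≠ 0) (hl1 : lam ≠ 1) :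
    Hren lam p q = (1 - lam)⁻¹ * log (p ^ lam + q ^ lam) := by
  have pw_eq (x : ℝ) : pw x lam = x ^ lam := by
    unfold pw
    split_ifs with hx
    · rw [hx, zero_rpow hl0]
    · rfl
  rw [Hren, if_neg hl1, pw_eq, pw_eq]

noncomputable def trigPowSum (lam θ : ℝ) : ℝ := (cos θ ^ 2) ^ lam + (sin θ ^ 2) ^ lam

lemma trigPowSum_pos (lam θ : ℝ) : 0 < trigPowSum lam θ := by
  unfold trigPowSum
  by_cases hc : cos θ = 0
  · have hs : sin θ ^ 2 = 1 := by nlinarith [sin_sq_add_cos_sq θ]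
    rw [hs, one_rpow]
    positivity
  · have := rpow_pos_of_pos (pow_pos (abs_pos.2 hc) 2) lam
    rw [sq_abs] at this
    positivity

lemma continuous_trigPowSum {lam : ℝ} (hl : 0 ≤ lam) : Continuous (trigPowSum lam) :=
  ((continuous_cos.pow 2).rpow_const fun _ => Or.inr hl).add
    ((continuous_sin.pow 2).rpow_const fun _ => Or.inr hl)

lemma sin_ne_zero_and_cos_ne_zero_of_mem_Ioo {θ : ℝ} (hθ : θ ∈ Ioo 0 (π / 2)) :
    sin θ ≠ 0 ∧ cos θ ≠ 0 :=
  ⟨(sin_pos_of_pos_of_lt_pi hθ.1 (by linarith [hθ.2, pi_pos])).ne',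
    (cos_pos_of_mem_Ioo ⟨by linarith [hθ.1, pi_pos], hθ.2⟩).ne'⟩

section Derivatives

variable {θ : ℝ}

lemma hasDerivAt_cos_sq_rpow (hc : cos θ ≠ 0) (r : ℝ) :
    HasDerivAt (fun x => (cos x ^ 2) ^ r) (-(2 * r * sin θ * cos θ * (cos θ ^ 2) ^ (r - 1))) θ := by
  have h := ((hasDerivAt_cos θ).fun_pow 2).rpow_const (p := r) (Or.inl (pow_ne_zero 2 hc))
  convert h using 1
  ring

lemma hasDerivAt_sin_sq_rpow (hs : sin θ ≠ 0) (r : ℝ) :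
    HasDerivAt (fun x => (sin x ^ 2) ^ r) (2 * r * sin θ * cos θ * (sin θ ^ 2) ^ (r - 1)) θ := by
  have h := ((hasDerivAt_sin θ).fun_pow 2).rpow_const (p := r) (Or.inl (pow_ne_zero 2 hs))
  convert h using 1
  ring

noncomputable def trigPowSumDeriv (lam θ : ℝ) : ℝ :=
  2 * lam * sin θ * cos θ * ((sin θ ^ 2) ^ (lam - 1) - (cos θ ^ 2) ^ (lam - 1))

lemma hasDerivAt_trigPowSum (lam : ℝ) (hs : sin θ ≠ 0) (hc : cos θ ≠ 0) :
    HasDerivAt (trigPowSum lam) (trigPowSumDeriv lam θ) θ := by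
  refine ((hasDerivAt_cos_sq_rpow hc lam).fun_add (hasDerivAt_sin_sq_rpow hs lam)).congr_deriv ?_
  rw [trigPowSumDeriv]
  ring

lemma hasDerivAt_trigPowSumDeriv (lam : ℝ) (hs : sin θ ≠ 0) (hc : cos θ ≠ 0) :
    HasDerivAt (trigPowSumDeriv lam)
      (2 * lam * (cos θ ^ 2 - sin θ ^ 2) * ((sin θ ^ 2) ^ (lam - 1) - (cos θ ^ 2) ^ (lam - 1))
        + 4 * lam * (lam - 1) * (sin θ ^ 2 * cos θ ^ 2)
          * ((sin θ ^ 2) ^ (lam - 1 - 1) + (cos θ ^ 2) ^ (lam - 1 - 1))) θ := by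
  have hsc := ((hasDerivAt_sin θ).const_mul (2 * lam)).fun_mul (hasDerivAt_cos θ)
  refine (hsc.fun_mul ((hasDerivAt_sin_sq_rpow hs (lam - 1)).fun_sub
    (hasDerivAt_cos_sq_rpow hc (lam - 1)))).congr_deriv ?_
  ring

end Derivatives

lemma renyi_numerator_neg {p q a b lam : ℝ} (hp : 0 < p) (hq : 0 < q) (ha : 0 < a) (hb : 0 < b)
    (hl : lam ∈ Ioc (0 : ℝ) (1 / 2)) :
    (2 * lam * (q - p) * (a / p - b / q) + 4 * lam * (lam - 1) * (p * q) * (a / p / p + b / q / q))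
      * (a + b) - (2 * lam) ^ 2 * (p * q) * (a / p - b / q) ^ 2 < 0 := by
  obtain ⟨hl0, hl2⟩ := hl
  have hM : 0 < 4 * lam * (a * q - b * p) ^ 2 + (2 - 4 * lam) * (a * q ^ 2 + b * p ^ 2) * (a + b)
      + 2 * (p * q) * (a + b) ^ 2 := by
    have : 0 ≤ 2 - 4 * lam := by linarith
    positivity
  calc _ = -(lam * (4 * lam * (a * q - b * p) ^ 2
          + (2 - 4 * lam) * (a * q ^ 2 + b * p ^ 2) * (a + b) + 2 * (p * q) * (a + b) ^ 2) / (p * q)) := by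
        field_simp
        ring
    _ < 0 := by
      rw [neg_lt_zero]
      positivity

section RenyiCosSin

variable {lam : ℝ}

lemma Hren_cos_sq_sin_sq (hl0 : lam ≠ 0) (hl1 : lam ≠ 1) :
    (fun θ => Hren lam (cos θ ^ 2) (sin θ ^ 2)) = fun θ => (1 - lam)⁻¹ * log (trigPowSum lam θ) :=
  funext fun _ => Hren_eq_log _ _ hl0 hl1

lemma deriv_deriv_Hren_cos_sq_sin_sq_neg (hl : lam ∈ Ioc (0 : ℝ) (1 / 2)) {θ : ℝ}
    (hs : sin θ ≠ 0) (hc : cos θ ≠ 0) :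
    deriv (deriv fun θ => Hren lam (cos θ ^ 2) (sin θ ^ 2)) θ < 0 := by
  have hl1 : lam ≠ 1 := fun h => by norm_num [h] at hl
  rw [Hren_cos_sq_sin_sq hl.1.ne' hl1]
  have hderiv : deriv (fun θ => (1 - lam)⁻¹ * log (trigPowSum lam θ)) =ᶠ[nhds θ]
      fun x => (1 - lam)⁻¹ * (trigPowSumDeriv lam x / trigPowSum lam x) := by
    have hU : IsOpen {x | sin x ≠ 0 ∧ cos x ≠ 0} :=
      (isOpen_ne_fun continuous_sin continuous_const).inter
        (isOpen_ne_fun continuous_cos continuous_const)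
    filter_upwards [hU.mem_nhds ⟨hs, hc⟩] with x ⟨hxs, hxc⟩
    exact (((hasDerivAt_trigPowSum lam hxs hxc).log (trigPowSum_pos lam x).ne').const_mul _).deriv
  rw [hderiv.deriv_eq, (((hasDerivAt_trigPowSumDeriv lam hs hc).fun_div
    (hasDerivAt_trigPowSum lam hs hc) (trigPowSum_pos lam θ).ne').const_mul _).deriv]
  have h1l : 0 < (1 - lam)⁻¹ := inv_pos.2 (by linarith [hl.2])
  refine mul_neg_of_pos_of_neg h1l (div_neg_of_neg_of_pos ?_ (by positivity [trigPowSum_pos lam θ]))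
  have hp : 0 < sin θ ^ 2 := by positivity
  have hq : 0 < cos θ ^ 2 := by positivity
  refine lt_of_eq_of_lt ?_
    (renyi_numerator_neg hp hq (rpow_pos_of_pos hp lam) (rpow_pos_of_pos hq lam) hl)
  simp only [trigPowSum, trigPowSumDeriv, rpow_sub_one hp.ne', rpow_sub_one hq.ne']
  ring

lemma concaveOn_Hren_cos_sq_sin_sq (hl : lam ∈ Ioc (0 : ℝ) (1 / 2)) :
    ConcaveOn ℝ (Icc 0 (π / 2)) fun θ => Hren lam (cos θ ^ 2) (sin θ ^ 2) := by
  have hcont : Continuous fun θ => Hren lam (cos θ ^ 2) (sin θ ^ 2) := by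
    rw [Hren_cos_sq_sin_sq hl.1.ne' fun h => by norm_num [h] at hl]
    exact continuous_const.mul
      ((continuous_trigPowSum hl.1.le).log fun θ => (trigPowSum_pos lam θ).ne')
  refine (strictConcaveOn_of_deriv2_neg (convex_Icc _ _) hcont.continuousOn
    fun θ hθ => ?_).concaveOn
  rw [interior_Icc] at hθ
  simpa only [Function.iterate_succ, Function.iterate_zero, Function.comp_apply, id_eq]
    using deriv_deriv_Hren_cos_sq_sin_sq_neg hl (sin_ne_zero_and_cos_ne_zero_of_mem_Ioo hθ).1
      (sin_ne_zero_and_cos_ne_zero_of_mem_Ioo hθ).2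

end RenyiCosSin

lemma concaveOn_gfun {α β γ : ℝ} (hα : α ∈ Ioc (0 : ℝ) (1 / 2))
    (hβ : β ∈ Ioc (0 : ℝ) (1 / 2)) (hγ : γ ∈ Icc 0 (π / 2)) :
    ConcaveOn ℝ (Icc 0 γ) (gfun α β γ) := by
  have hsub : Icc 0 γ ⊆ (γ - ·) ⁻¹' Icc 0 (π / 2) := fun θ hθ =>
    ⟨by linarith [hθ.2], by linarith [hθ.1, hγ.2]⟩
  exact ((concaveOn_Hren_cos_sq_sin_sq hα).subset (Icc_subset_Icc_right hγ.2)
    (convex_Icc _ _)).add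
      (((concaveOn_Hren_cos_sq_sin_sq hβ).comp_const_sub γ).subset hsub (convex_Icc _ _))

/-- concavity of `θ ↦ H_λ((cos²θ, sin²θ))` for `λ ∈ (0, 1/2]`, strict
negativity of its second derivative on `(0, π/4)`, and consequences: the entropies
sum is concave on `[0, γ]` and minimized at an endpoint. -/
theorem stmt_12 :
    (∀ lam : ℝ, lam ∈ Set.Ioc (0 : ℝ) (1 / 2) →
      ConcaveOn ℝ (Set.Icc 0 (Real.pi / 4))
        (fun θ : ℝ => Hren lam (Real.cos θ ^ 2) (Real.sin θ ^ 2)) ∧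
      ∀ θ ∈ Set.Ioo (0 : ℝ) (Real.pi / 4),
        deriv (deriv (fun θ : ℝ => Hren lam (Real.cos θ ^ 2) (Real.sin θ ^ 2))) θ < 0) ∧
    (∀ α β : ℝ, α ∈ Set.Ioc (0 : ℝ) (1 / 2) → β ∈ Set.Ioc (0 : ℝ) (1 / 2) →
      ∀ γ ∈ Set.Icc (0 : ℝ) (Real.pi / 4),
        ConcaveOn ℝ (Set.Icc 0 γ) (fun θ : ℝ => gfun α β γ θ) ∧
        (IsMinOn (fun θ : ℝ => gfun α β γ θ) (Set.Icc 0 γ) 0 ∨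
          IsMinOn (fun θ : ℝ => gfun α β γ θ) (Set.Icc 0 γ) γ)) := by
  have hquarter : π / 4 ≤ π / 2 := by linarith [pi_pos]
  refine ⟨fun lam hl => ⟨?_, fun θ hθ => ?_⟩, fun α β hα hβ γ hγ => ?_⟩
  · exact (concaveOn_Hren_cos_sq_sin_sq hl).subset (Icc_subset_Icc_right hquarter)
      (convex_Icc _ _)
  · obtain ⟨hs, hc⟩ := sin_ne_zero_and_cos_ne_zero_of_mem_Ioo ⟨hθ.1, hθ.2.trans_le hquarter⟩
    exact deriv_deriv_Hren_cos_sq_sin_sq_neg hl hs hc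
  · have hconc := concaveOn_gfun hα hβ ⟨hγ.1, hγ.2.trans hquarter⟩
    exact ⟨hconc, hconc.isMinOn_left_or_right hγ.1⟩
end
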